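/- arXiv:0802.1425 — 6 statements merged into one kernel-verified Lean document; each statement's English description precedes it below -/
import Mathlib

section
/- Let M be a set of unit vectors in ℝ^N (N > 1) such that |(a,b)| ∈ {0, 1/√N} for all distinct a, b ∈ M. Then |M| ≤ N(N+2)/2. -/
/-!
To each unit vector `a ∈ M` attach the traceless symmetric matrix `T a = a aᵀ - I / N`. Its Gram
matrix is `⟪T a, T b⟫ = ⟪a, b⟫² - 1 / N`, equal to `1 - 1/N` on the diagonal and lying in
`[-1/N, 0]` off it. Since the off-diagonal entries are nonpositive, the kernel of
`v ↦ ∑ v a • T a` is closed under `v ↦ |v|`, and evaluating the kernel equation at a maximal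
coordinate of `|v|` shows that every nonzero kernel vector has at least `N` nonzero entries. A
subspace of `ℝ^M` with these two properties has dimension at most `|M| / N`, so the rank of the
family `T` is at least `(N - 1) |M| / N`. As the `T a` are traceless symmetric, that rank is at
most `N (N + 1) / 2 - 1 = (N - 1) (N + 2) / 2`, which gives `|M| ≤ N (N + 2) / 2`.
-/

open scoped RealInnerProductSpace

open Finset Module Submodule

theorem Submodule.finrank_le_finrank_inf_ker_add_one {V : Type*} [AddCommGroup V] [Module ℝ V]
    (K : Submodule ℝ V) [FiniteDimensional ℝ K] (f : V →ₗ[ℝ] ℝ) :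
    finrank ℝ K ≤ finrank ℝ ↥(K ⊓ LinearMap.ker f) + 1 := by
  have hker : finrank ℝ (LinearMap.ker (f ∘ₗ K.subtype)) = finrank ℝ ↥(K ⊓ LinearMap.ker f) := by
    rw [LinearMap.ker_comp, ← Submodule.map_comap_subtype, Submodule.finrank_map_subtype_eq]
  have hrange : finrank ℝ (LinearMap.range (f ∘ₗ K.subtype)) ≤ 1 :=
    (Submodule.finrank_le _).trans (Module.finrank_self ℝ).le
  have := LinearMap.finrank_range_add_finrank_ker (f ∘ₗ K.subtype)
  omega

section AbsClosed

variable {ι : Type*} {K : Submodule ℝ (ι → ℝ)}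

theorem inf_mem_of_abs_mem (habs : ∀ v ∈ K, |v| ∈ K) {v w : ι → ℝ} (hv : v ∈ K) (hw : w ∈ K) :
    v ⊓ w ∈ K := by
  rw [inf_eq_half_smul_add_sub_abs_sub' ℝ]
  exact K.smul_mem _ (K.sub_mem (K.add_mem hv hw) (habs _ (K.sub_mem hw hv)))

variable [Fintype ι]

/-- Otherwise `|w| ⊓ |v|` would be a nonzero element of `K` with smaller support than `v`. -/
theorem eq_zero_of_support_minimal (habs : ∀ v ∈ K, |v| ∈ K) {v w : ι → ℝ} (hv : v ∈ K)
    (hmin : ∀ u ∈ K, u ≠ 0 → #{i | v i ≠ 0} ≤ #{i | u i ≠ 0}) {a : ι} (hva : v a ≠ 0)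
    (hw : w ∈ K) (hwa : w a = 0) {i : ι} (hvi : v i ≠ 0) : w i = 0 := by
  classical
  have hz : |w| ⊓ |v| = 0 := by
    by_contra hne
    have hsub : ({j | (|w| ⊓ |v|) j ≠ 0} : Finset ι) ⊆ ({j | v j ≠ 0} : Finset ι).erase a := by
      intro j hj
      replace hj : min |w j| |v j| ≠ 0 := (mem_filter.mp hj).2
      simp only [mem_erase, mem_filter, mem_univ, true_and]
      exact ⟨by rintro rfl; simp [hwa] at hj, by rintro hvj; simp [hvj] at hj⟩
    have := card_le_card hsub
    have := card_erase_lt_of_mem (s := ({j | v j ≠ 0} : Finset ι)) (by simpa using hva)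
    have := hmin _ (inf_mem_of_abs_mem habs (habs w hw) (habs v hv)) hne
    omega
  have := congrFun hz i
  simp only [Pi.inf_apply, Pi.abs_apply, Pi.zero_apply] at this
  rcases min_eq_iff.mp this with h | h
  · exact abs_eq_zero.mp h.1
  · exact absurd (abs_eq_zero.mp h.1) hvi

/-- Cutting `K` by the hyperplane `w a = 0`, where `a` lies in the support of a vector `v ∈ K` of
minimal support, lowers the dimension by at most one and removes `supp v` from all supports. -/
theorem mul_finrank_le_card_of_support_subset (habs : ∀ v ∈ K, |v| ∈ K) {n : ℕ}
    (hsupp : ∀ v ∈ K, v ≠ 0 → n ≤ #{i | v i ≠ 0}) {A : Finset ι}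
    (hA : ∀ v ∈ K, ∀ i, v i ≠ 0 → i ∈ A) : n * finrank ℝ K ≤ #A := by
  classical
  induction hk : finrank ℝ K using Nat.strong_induction_on generalizing K A with
  | _ k ih =>
  obtain rfl | hK := eq_or_ne K ⊥
  · simp [← hk]
  obtain ⟨v, ⟨hv, hv0⟩, hmin⟩ := (measure fun v : ι → ℝ => #{i | v i ≠ 0}).wf.has_min
    {v | v ∈ K ∧ v ≠ 0} ((Submodule.ne_bot_iff K).mp hK)
  replace hmin : ∀ u ∈ K, u ≠ 0 → #{i | v i ≠ 0} ≤ #{i | u i ≠ 0} :=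
    fun u hu hu0 => not_lt.mp (hmin u ⟨hu, hu0⟩)
  obtain ⟨a, hva⟩ := Function.ne_iff.mp hv0
  set S : Finset ι := {i | v i ≠ 0}
  set K' := K ⊓ LinearMap.ker (LinearMap.proj a : (ι → ℝ) →ₗ[ℝ] ℝ)
  have hK' : ∀ w ∈ K', w ∈ K ∧ w a = 0 := fun w hw => ⟨hw.1, hw.2⟩
  have hlt : finrank ℝ K' < k := by
    rw [← hk]
    refine Submodule.finrank_lt_finrank_of_lt (lt_of_le_of_ne inf_le_left fun h => hva ?_)
    exact (hK' v (h ▸ hv)).2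
  have hrec := ih _ hlt (K := K') (A := A \ S)
    (fun w hw => ⟨habs w (hK' w hw).1, by simp [(hK' w hw).2]⟩)
    (fun w hw => hsupp w (hK' w hw).1)
    (fun w hw i hwi => by
      have ⟨hwK, hwa⟩ := hK' w hw
      refine mem_sdiff.mpr ⟨hA w hwK i hwi, fun hvi => hwi ?_⟩
      exact eq_zero_of_support_minimal habs hv hmin hva hwK hwa (mem_filter.mp hvi).2) rfl
  have hcodim : k ≤ finrank ℝ K' + 1 := hk ▸ K.finrank_le_finrank_inf_ker_add_one _
  have hS : S ⊆ A := fun i hi => hA v hv i (mem_filter.mp hi).2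
  have hnS : n ≤ #S := hsupp v hv hv0
  calc n * k ≤ n * (finrank ℝ K' + 1) := Nat.mul_le_mul_left _ hcodim
    _ ≤ #(A \ S) + #S := by rw [mul_add_one]; omega
    _ = #A := card_sdiff_add_card_eq_card hS

theorem mul_finrank_le_card_of_abs_mem (habs : ∀ v ∈ K, |v| ∈ K) {n : ℕ}
    (hsupp : ∀ v ∈ K, v ≠ 0 → n ≤ #{i | v i ≠ 0}) : n * finrank ℝ K ≤ Fintype.card ι :=
  mul_finrank_le_card_of_support_subset habs hsupp (A := univ) (fun _ _ i _ => mem_univ i)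

end AbsClosed

section Gram

variable {E : Type*} [NormedAddCommGroup E] [InnerProductSpace ℝ E] {ι : Type*} [Fintype ι]
  (T : ι → E)

theorem norm_sq_sum_smul (v : ι → ℝ) :
    ‖∑ a, v a • T a‖ ^ 2 = ∑ a, ∑ b, v a * v b * ⟪T a, T b⟫ := by
  simp only [← real_inner_self_eq_norm_sq, sum_inner, inner_sum, real_inner_smul_left,
    real_inner_smul_right]
  refine sum_congr rfl fun a _ => sum_congr rfl fun b _ => by rw [real_inner_comm]; ring

theorem norm_sum_abs_smul_le (hT : ∀ a b, a ≠ b → ⟪T a, T b⟫ ≤ 0) (v : ι → ℝ) :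
    ‖∑ a, |v a| • T a‖ ≤ ‖∑ a, v a • T a‖ := by
  refine (sq_le_sq₀ (norm_nonneg _) (norm_nonneg _)).mp ?_
  rw [norm_sq_sum_smul, norm_sq_sum_smul]
  refine sum_le_sum fun a _ => sum_le_sum fun b _ => ?_
  obtain rfl | hab := eq_or_ne a b
  · rw [abs_mul_abs_self]
  · rw [← abs_mul]
    exact mul_le_mul_of_nonpos_right (le_abs_self _) (hT a b hab)

theorem abs_mem_ker_linearCombination (hT : ∀ a b, a ≠ b → ⟪T a, T b⟫ ≤ 0) {v : ι → ℝ}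
    (hv : v ∈ LinearMap.ker (Fintype.linearCombination ℝ T)) :
    |v| ∈ LinearMap.ker (Fintype.linearCombination ℝ T) := by
  simp only [LinearMap.mem_ker, Fintype.linearCombination_apply, Pi.abs_apply] at hv ⊢
  have := norm_sum_abs_smul_le T hT v
  rwa [hv, norm_zero, norm_le_zero_iff] at this

variable {n : ℕ} (hself : ∀ a, ⟪T a, T a⟫ = 1 - (n : ℝ)⁻¹)
  (hoff : ∀ a b, a ≠ b → -(n : ℝ)⁻¹ ≤ ⟪T a, T b⟫ ∧ ⟪T a, T b⟫ ≤ 0)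
include hself hoff

/-- Pairing `∑ b, |v b| • T b = 0` with `T a`, where `|v a|` is maximal, gives
`(1 - 1/n) |v a| ≤ (#supp v - 1) |v a| / n`. -/
theorem le_card_support_of_mem_ker {v : ι → ℝ}
    (hv : v ∈ LinearMap.ker (Fintype.linearCombination ℝ T)) (hv0 : v ≠ 0) :
    n ≤ #{a | v a ≠ 0} := by
  classical
  obtain rfl | hn := Nat.eq_zero_or_pos n
  · exact Nat.zero_le _
  set S : Finset ι := {a | v a ≠ 0}
  have hu := abs_mem_ker_linearCombination T (fun a b hab => (hoff a b hab).2) hv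
  simp only [LinearMap.mem_ker, Fintype.linearCombination_apply, Pi.abs_apply] at hu
  obtain ⟨a, haS, hmax⟩ := S.exists_max_image (fun b => |v b|)
    (by simpa [S, Finset.Nonempty, Function.ne_iff] using hv0)
  have hva : 0 < |v a| := abs_pos.mpr (mem_filter.mp haS).2
  have hpair : 0 = |v a| * (1 - (n : ℝ)⁻¹) + ∑ b ∈ S.erase a, |v b| * ⟪T a, T b⟫ := by
    have := congrArg (⟪T a, ·⟫) hu
    simp only [inner_sum, real_inner_smul_right, inner_zero_right] at this
    rw [← sum_subset (subset_univ S) (fun b _ hb => by simp [S] at hb; simp [hb]),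
      ← add_sum_erase S _ haS, hself] at this
    linarith
  have hbound : ∀ b ∈ S.erase a, -(|v a| * (n : ℝ)⁻¹) ≤ |v b| * ⟪T a, T b⟫ := by
    intro b hb
    have ⟨hlo, hhi⟩ := hoff a b (ne_of_mem_erase hb).symm
    have := hmax b (mem_of_mem_erase hb)
    nlinarith [abs_nonneg (v b)]
  have hsum := card_nsmul_le_sum _ _ _ hbound
  rw [card_erase_of_mem haS, nsmul_eq_mul, Nat.cast_sub (card_pos.mpr ⟨a, haS⟩)] at hsum
  have hn' : (0 : ℝ) < n := Nat.cast_pos.mpr hn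
  have key : |v a| * (1 - (n : ℝ)⁻¹) ≤ (#S - 1) * (|v a| * (n : ℝ)⁻¹) := by linarith
  have : (n : ℝ) - 1 ≤ #S - 1 := by
    refine le_of_mul_le_mul_left ?_ hva
    linear_combination (n : ℝ) * key + |v a| * #S * mul_inv_cancel₀ hn'.ne'
  exact_mod_cast (by linarith : (n : ℝ) ≤ #S)

theorem sub_one_mul_card_le_mul_finrank_span :
    (n - 1) * Fintype.card ι ≤ n * finrank ℝ (span ℝ (Set.range T)) := by
  set L := Fintype.linearCombination ℝ T
  have hker : n * finrank ℝ (LinearMap.ker L) ≤ Fintype.card ι :=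
    mul_finrank_le_card_of_abs_mem
      (fun _ hv => abs_mem_ker_linearCombination T (fun a b hab => (hoff a b hab).2) hv)
      (fun _ hv hv0 => le_card_support_of_mem_ker T hself hoff hv hv0)
  have hrank := L.finrank_range_add_finrank_ker
  rw [Fintype.range_linearCombination, Module.finrank_fintype_fun_eq_card] at hrank
  rw [← hrank, Nat.sub_one_mul, mul_add]
  omega

end Gram

section TracelessOuter

variable {ι : Type*}

/-- The traceless part `a aᵀ - I / card ι` of `a aᵀ`, as a function on unordered pairs. -/
noncomputable def tracelessOuter [Fintype ι] [DecidableEq ι] (a : EuclideanSpace ℝ ι) :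
    Sym2 ι → ℝ :=
  Sym2.lift ⟨fun i j => a i * a j - if i = j then (Fintype.card ι : ℝ)⁻¹ else 0,
    fun i j => by simp only [mul_comm, eq_comm]⟩

variable (ι) in
/-- Symmetric matrices, seen as functions on `Sym2 ι`, embedded in `EuclideanSpace ℝ (ι × ι)`,
whose inner product is the Frobenius one. -/
noncomputable def sym2ToPairs : (Sym2 ι → ℝ) →ₗ[ℝ] EuclideanSpace ℝ (ι × ι) :=
  (WithLp.linearEquiv 2 ℝ (ι × ι → ℝ)).symm.toLinearMap ∘ₗ
    LinearMap.funLeft ℝ ℝ fun p : ι × ι => s(p.1, p.2)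

variable (ι) in
noncomputable def diagSum [Fintype ι] : (Sym2 ι → ℝ) →ₗ[ℝ] ℝ :=
  ∑ i : ι, LinearMap.proj s(i, i)

theorem EuclideanSpace.real_inner_eq_sum [Fintype ι] (x y : EuclideanSpace ℝ ι) :
    ⟪x, y⟫ = ∑ i, x i * y i := by
  simp [PiLp.inner_apply, mul_comm]

theorem sym2ToPairs_apply (f : Sym2 ι → ℝ) (p : ι × ι) :
    sym2ToPairs ι f p = f s(p.1, p.2) := by
  rfl

variable [Fintype ι] [DecidableEq ι]

theorem tracelessOuter_mk (a : EuclideanSpace ℝ ι) (i j : ι) :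
    tracelessOuter a s(i, j) = a i * a j - if i = j then (Fintype.card ι : ℝ)⁻¹ else 0 := by
  rfl

theorem inner_sym2ToPairs_tracelessOuter (a b : EuclideanSpace ℝ ι) :
    ⟪sym2ToPairs ι (tracelessOuter a), sym2ToPairs ι (tracelessOuter b)⟫ =
      ⟪a, b⟫ ^ 2 - (‖a‖ ^ 2 + ‖b‖ ^ 2 - 1) / Fintype.card ι := by
  have hterm : ∀ (t : ℝ) i j,
      (a i * a j - if i = j then t else 0) * (b i * b j - if i = j then t else 0) =
        a i * b i * (a j * b j) - if i = j then t * (a i * a j + b i * b j) - t ^ 2 else 0 := by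
    intro t i j; split_ifs <;> ring
  have hct : (Fintype.card ι : ℝ) * (Fintype.card ι : ℝ)⁻¹ ^ 2 = (Fintype.card ι : ℝ)⁻¹ := by
    obtain h | h := eq_or_ne (Fintype.card ι : ℝ) 0
    · simp [h]
    · field_simp
  rw [← real_inner_self_eq_norm_sq, ← real_inner_self_eq_norm_sq]
  simp only [EuclideanSpace.real_inner_eq_sum, Fintype.sum_prod_type]
  simp only [sym2ToPairs_apply, tracelessOuter_mk, hterm, sum_sub_distrib, sum_ite_eq, mem_univ,
    if_true, ← sum_mul_sum, ← sq]
  rw [sum_const, card_univ, nsmul_eq_mul, hct, ← mul_sum, sum_add_distrib, div_eq_mul_inv]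
  ring

theorem diagSum_tracelessOuter [Nonempty ι] (a : EuclideanSpace ℝ ι) :
    diagSum ι (tracelessOuter a) = ‖a‖ ^ 2 - 1 := by
  rw [EuclideanSpace.real_norm_sq_eq]
  simp [diagSum, tracelessOuter, sum_sub_distrib, sq]

omit [DecidableEq ι] in
theorem finrank_ker_diagSum_lt [Nonempty ι] :
    finrank ℝ (LinearMap.ker (diagSum ι)) < (Fintype.card ι + 1).choose 2 := by
  rw [← Sym2.card, ← Module.finrank_fintype_fun_eq_card ℝ]
  refine Submodule.finrank_lt fun h => ?_
  have : (1 : Sym2 ι → ℝ) ∈ LinearMap.ker (diagSum ι) := h ▸ Submodule.mem_top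
  simp [diagSum] at this

theorem finrank_span_tracelessOuter_lt [Nonempty ι] {κ : Type*} (u : κ → EuclideanSpace ℝ ι)
    (hu : ∀ k, ‖u k‖ = 1) :
    finrank ℝ (span ℝ (Set.range fun k => sym2ToPairs ι (tracelessOuter (u k)))) <
      (Fintype.card ι + 1).choose 2 := by
  have hspan : span ℝ (Set.range fun k => sym2ToPairs ι (tracelessOuter (u k))) ≤
      (LinearMap.ker (diagSum ι)).map (sym2ToPairs ι) := by
    rw [span_le]
    rintro _ ⟨k, rfl⟩
    exact ⟨_, by simp [diagSum_tracelessOuter, hu k], rfl⟩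
  exact ((finrank_mono hspan).trans (finrank_map_le _ _)).trans_lt finrank_ker_diagSum_lt

end TracelessOuter

theorem two_mul_card_le_of_sq_inner_le {ι : Type*} [Fintype ι] [DecidableEq ι]
    (hι : 1 < Fintype.card ι) (M : Finset (EuclideanSpace ℝ ι)) (hunit : ∀ a ∈ M, ‖a‖ = 1)
    (hinner : ∀ a ∈ M, ∀ b ∈ M, a ≠ b → ⟪a, b⟫ ^ 2 ≤ (Fintype.card ι : ℝ)⁻¹) :
    2 * #M ≤ Fintype.card ι * (Fintype.card ι + 2) := by
  set n := Fintype.card ι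
  have : Nonempty ι := Fintype.card_pos_iff.mp (by omega)
  set T : M → EuclideanSpace ℝ (ι × ι) :=
    fun a => sym2ToPairs ι (tracelessOuter (a : EuclideanSpace ℝ ι))
  have hT : ∀ a b : M, ⟪T a, T b⟫ = ⟪(a : EuclideanSpace ℝ ι), b⟫ ^ 2 - (n : ℝ)⁻¹ := by
    intro a b
    rw [inner_sym2ToPairs_tracelessOuter, hunit a a.2, hunit b b.2]
    ring
  have hgram := sub_one_mul_card_le_mul_finrank_span T (n := n)
    (fun a => by rw [hT, real_inner_self_eq_norm_sq, hunit a a.2]; ring)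
    (fun a b hab => by
      rw [hT]
      exact ⟨by linarith [sq_nonneg ⟪(a : EuclideanSpace ℝ ι), b⟫],
        by linarith [hinner a a.2 b b.2 (Subtype.coe_ne_coe.mpr hab)]⟩)
  have hrank :=
    finrank_span_tracelessOuter_lt (fun a : M => (a : EuclideanSpace ℝ ι)) (fun a => hunit a a.2)
  have hchoose : 2 * (n + 1).choose 2 = (n + 1) * n := by
    have := Nat.add_one_mul_choose_eq n 1
    rw [Nat.choose_one_right] at this
    linarith
  rw [Fintype.card_coe] at hgram
  have hr := Nat.mul_le_mul_left n hrank
  refine Nat.le_of_mul_le_mul_left ?_ (by omega : 0 < n - 1)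
  zify [hι.le] at hgram hr hchoose ⊢
  linear_combination 2 * hgram + 2 * hr + (n : ℤ) * hchoose

/-- A set of unit vectors in ℝ^N (N > 1) with pairwise absolute inner
products in {0, 1/√N} has at most N(N+2)/2 elements. -/
theorem stmt_2 (N : ℕ) (hN : 1 < N) (M : Finset (EuclideanSpace ℝ (Fin N)))
    (hunit : ∀ a ∈ M, ‖a‖ = 1)
    (hang : ∀ a ∈ M, ∀ b ∈ M, a ≠ b →
      |⟪a, b⟫| = 0 ∨ |⟪a, b⟫| = 1 / Real.sqrt N) :
    (M.card : ℝ) ≤ N * (N + 2) / 2 := by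
  have hinner : ∀ a ∈ M, ∀ b ∈ M, a ≠ b → ⟪a, b⟫ ^ 2 ≤ (Fintype.card (Fin N) : ℝ)⁻¹ := by
    intro a ha b hb hab
    rw [← sq_abs, Fintype.card_fin]
    rcases hang a ha b hb hab with h | h <;> rw [h]
    · simp
    · rw [div_pow, one_pow, Real.sq_sqrt (Nat.cast_nonneg N), one_div]
  have h := two_mul_card_le_of_sq_inner_le (by simpa using hN) M hunit hinner
  rw [Fintype.card_fin] at h
  have : (2 * #M : ℝ) ≤ N * (N + 2) := by exact_mod_cast h
  linarith
end

section
/- Let R be a binary symmetric m×m matrix and define T_R : 𝔽₂^m → ℤ₄ by T_R(v) = Σᵢ R_{ii} v̂ᵢ² + 2 Σ_{i<j} R_{ij} v̂ᵢ v̂ⱼ, where v̂ ∈ ℤ₄^m is the 0/1 lift of v. Then T_R(u+v) = T_R(u) + T_R(v) + 2·(û R v̂ᵀ) for all u, v ∈ 𝔽₂^m, where the addition u+v is in 𝔽₂^m. -/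
open Finset Matrix

/-!
The lift of `u + v` differs from `û + v̂` by the even correction `-2 ûᵢ v̂ᵢ`, which vanishes in
`ℤ₄` both under squaring and under multiplication by `2`. Hence `T_R(u + v)` is the triangular
quadratic form of the lifted matrix `R̂` evaluated at `û + v̂`. For symmetric `R̂` that form is
`w ↦ w R̂ wᵀ`, whose polarization is `2 · x R̂ yᵀ`.
-/

section TriangularForm

variable {n S : Type*} [Fintype n] [LinearOrder n] [CommRing S]

def triangularQuadForm (A : Matrix n n S) (w : n → S) : S :=
  ∑ i, A i i * w i ^ 2 + 2 * ∑ i, ∑ j, if i < j then A i j * w i * w j else 0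

theorem sum_sum_eq_sum_diag_add_sum_offDiag (f : n → n → S) :
    ∑ i, ∑ j, f i j = ∑ i, f i i + ∑ i, ∑ j, if i < j then f i j + f j i else 0 := by
  have split : ∀ i j, f i j =
      (if i = j then f i j else 0) + (if i < j then f i j else 0) + (if j < i then f i j else 0) := by
    intro i j
    rcases lt_trichotomy i j with h | rfl | h
    · simp [h, h.ne, h.not_gt]
    · simp
    · simp [h, h.ne', h.not_gt]
  calc ∑ i, ∑ j, f i j
      = ∑ i, f i i + ∑ i, ∑ j, (if i < j then f i j else 0)
          + ∑ i, ∑ j, (if j < i then f i j else 0) := by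
        conv_lhs => enter [2, i, 2, j]; rw [split i j]
        simp only [sum_add_distrib, sum_ite_eq, mem_univ, if_true]
    _ = ∑ i, f i i + ∑ i, ∑ j, if i < j then f i j + f j i else 0 := by
        rw [add_assoc, sum_comm (f := fun i j => if j < i then f i j else 0), ← sum_add_distrib]
        congr 1
        refine sum_congr rfl fun i _ => ?_
        rw [← sum_add_distrib]
        refine sum_congr rfl fun j _ => ?_
        split_ifs <;> simp

theorem triangularQuadForm_eq_dotProduct_mulVec {A : Matrix n n S} (hA : A.IsSymm) (w : n → S) :
    triangularQuadForm A w = w ⬝ᵥ A *ᵥ w := by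
  have hexpand : w ⬝ᵥ A *ᵥ w = ∑ i, ∑ j, A i j * w i * w j := by
    simp only [dotProduct, mulVec, mul_sum]
    exact sum_congr rfl fun i _ => sum_congr rfl fun j _ => by ring
  rw [hexpand, sum_sum_eq_sum_diag_add_sum_offDiag, triangularQuadForm, mul_sum]
  congr 1
  · exact sum_congr rfl fun i _ => by ring
  · refine sum_congr rfl fun i _ => ?_
    rw [mul_sum]
    refine sum_congr rfl fun j _ => ?_
    rw [mul_ite, mul_zero, hA.apply i j]
    split_ifs <;> ring

omit [LinearOrder n] in
theorem dotProduct_mulVec_add_add {A : Matrix n n S} (hA : A.IsSymm) (x y : n → S) :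
    (x + y) ⬝ᵥ A *ᵥ (x + y) = x ⬝ᵥ A *ᵥ x + y ⬝ᵥ A *ᵥ y + 2 * (x ⬝ᵥ A *ᵥ y) := by
  have hyx : y ⬝ᵥ A *ᵥ x = x ⬝ᵥ A *ᵥ y := by
    rw [dotProduct_comm, dotProduct_mulVec, ← vecMul_transpose, hA.eq]
  rw [mulVec_add, add_dotProduct, dotProduct_add, dotProduct_add, hyx]
  ring

end TriangularForm

theorem ZMod.natCast_val_add_sq (a b : ZMod 2) :
    ((a + b).val : ZMod 4) ^ 2 = ((a.val : ZMod 4) + b.val) ^ 2 := by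
  revert a b; decide

theorem ZMod.two_mul_natCast_val_add (a b : ZMod 2) :
    2 * ((a + b).val : ZMod 4) = 2 * ((a.val : ZMod 4) + b.val) := by
  revert a b; decide

def liftVec {n : Type*} (u : n → ZMod 2) : n → ZMod 4 := fun i => (u i).val

theorem triangularQuadForm_liftVec_add {n : Type*} [Fintype n] [LinearOrder n]
    (A : Matrix n n (ZMod 4)) (u v : n → ZMod 2) :
    triangularQuadForm A (liftVec (u + v)) = triangularQuadForm A (liftVec u + liftVec v) := by
  simp only [triangularQuadForm, liftVec, Pi.add_apply, ZMod.natCast_val_add_sq, mul_sum, mul_ite,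
    mul_zero]
  congr 1
  refine sum_congr rfl fun i _ => sum_congr rfl fun j _ => ?_
  congr 1
  calc 2 * (A i j * ((u i + v i).val : ZMod 4) * (u j + v j).val)
      = A i j * (2 * ((u i + v i).val : ZMod 4)) * (u j + v j).val := by ring
    _ = A i j * ((u i).val + (v i).val) * (2 * ((u j + v j).val : ZMod 4)) := by
        rw [ZMod.two_mul_natCast_val_add]; ring
    _ = 2 * (A i j * ((u i).val + (v i).val) * ((u j).val + (v j).val)) := by
        rw [ZMod.two_mul_natCast_val_add]; ring

/-- For a binary symmetric m×m matrix R, the ℤ₄-valued quadratic form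
T_R(v) = Σᵢ R_{ii} v̂ᵢ² + 2 Σ_{i<j} R_{ij} v̂ᵢ v̂ⱼ satisfies
T_R(u+v) = T_R(u) + T_R(v) + 2·(û R v̂ᵀ). -/
theorem stmt_4 (m : ℕ) (R : Matrix (Fin m) (Fin m) (ZMod 2))
    (hsymm : R.IsSymm)
    (lift : ZMod 2 → ZMod 4) (hlift : ∀ x : ZMod 2, lift x = (x.val : ZMod 4))
    (T : (Fin m → ZMod 2) → ZMod 4)
    (hT : ∀ v, T v = (∑ i, lift (R i i) * (lift (v i)) ^ 2) +
      2 * ∑ i, ∑ j, if i < j then lift (R i j) * lift (v i) * lift (v j) else 0) :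
    ∀ u v : Fin m → ZMod 2,
      T (u + v) = T u + T v + 2 * ∑ i, ∑ j, lift (u i) * lift (R i j) * lift (v j) := by
  intro u v
  have hT' : ∀ w, T w = triangularQuadForm (R.map lift) (liftVec w) := by
    intro w; simp only [hT, triangularQuadForm, liftVec, map_apply, hlift]
  have hsymm' : (R.map lift).IsSymm := hsymm.map lift
  rw [hT', hT', hT', triangularQuadForm_liftVec_add,
    triangularQuadForm_eq_dotProduct_mulVec hsymm', triangularQuadForm_eq_dotProduct_mulVec hsymm',
    triangularQuadForm_eq_dotProduct_mulVec hsymm', dotProduct_mulVec_add_add hsymm']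
  simp only [dotProduct, mulVec, mul_sum, liftVec, map_apply, hlift, mul_assoc, mul_left_comm]
end

section
/- Let α = (−√N−2)/(N−2), β = (√N−2)/(N−2), γ = −2/(N−2). The 8×8 matrix with rows (1,1,1,1,1,1,1,1), (α,β,γ,α,β,γ,α,β), (α²,β²,γ²,α²,β²,γ²,α²,β²), (α,α,α,β,β,β,γ,γ), (α²,αβ,αγ,αβ,β²,βγ,αγ,βγ), (α³,αβ²,αγ²,α²β,β³,βγ²,α²γ,β²γ), (α²,α²,α²,β²,β²,β²,γ²,γ²), (α³,α²β,α²γ,αβ²,β³,β²γ,αγ²,βγ²) has determinant (α−β)⁶(α−γ)⁴(β−γ)⁴, which is nonzero when N > 4. -/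
/-!
Index the columns by the eight points `(x, y)` of `{α, β, γ}²` other than `(γ, γ)` and the rows
by the monomials `xⁱ yʲ` (`i, j ≤ 2`) other than `x²y²`; the matrix records their values. The
unitriangular row operations replacing `y` by `y - α` and `y²` by `(y - α)(y - β)` make it block
upper triangular, with diagonal blocks `V(α, β, γ)`, `(β - α) V(α, β, γ)` and
`(γ - α)(γ - β) V(α, β)`, where `V` is a (transposed) Vandermonde matrix.
-/

open Matrix

section
variable {R : Type*} [CommRing R]

def monomialGridMatrix (α β γ : R) : Matrix (Fin 8) (Fin 8) R :=
  !![1, 1, 1, 1, 1, 1, 1, 1;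
    α, β, γ, α, β, γ, α, β;
    α^2, β^2, γ^2, α^2, β^2, γ^2, α^2, β^2;
    α, α, α, β, β, β, γ, γ;
    α^2, α*β, α*γ, α*β, β^2, β*γ, α*γ, β*γ;
    α^3, α*β^2, α*γ^2, α^2*β, β^3, β*γ^2, α^2*γ, β^2*γ;
    α^2, α^2, α^2, β^2, β^2, β^2, γ^2, γ^2;
    α^3, α^2*β, α^2*γ, α*β^2, β^3, β^2*γ, α*γ^2, β*γ^2]

def gridRowReduction (α β : R) : Matrix (Fin 8) (Fin 8) R :=
  !![1, 0, 0, 0, 0, 0, 0, 0;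
    0, 1, 0, 0, 0, 0, 0, 0;
    0, 0, 1, 0, 0, 0, 0, 0;
    -α, 0, 0, 1, 0, 0, 0, 0;
    0, -α, 0, 0, 1, 0, 0, 0;
    0, 0, -α, 0, 0, 1, 0, 0;
    α*β, 0, 0, -(α+β), 0, 0, 1, 0;
    0, α*β, 0, 0, -(α+β), 0, 0, 1]

def powerMatrix (m : ℕ) {n : ℕ} (v : Fin n → R) : Matrix (Fin m) (Fin n) R :=
  of fun i j => v j ^ (i : ℕ)

theorem det_powerMatrix {n : ℕ} (v : Fin n → R) :
    (powerMatrix n v).det = ∏ i, ∏ j ∈ Finset.Ioi i, (v j - v i) := by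
  rw [show powerMatrix n v = (vandermonde v)ᵀ from rfl, det_transpose, det_vandermonde]

theorem det_powerMatrix_two (a b : R) : (powerMatrix 2 ![a, b]).det = b - a := by
  simp [det_powerMatrix, Fin.prod_univ_succ]

theorem det_powerMatrix_three (a b c : R) :
    (powerMatrix 3 ![a, b, c]).det = (b - a) * (c - a) * (c - b) := by
  simp [det_powerMatrix, Fin.prod_univ_succ, mul_assoc]

def blockIndexEquiv : (Fin 3 ⊕ Fin 3) ⊕ Fin 2 ≃ Fin 8 :=
  (Equiv.sumCongr finSumFinEquiv (Equiv.refl (Fin 2))).trans finSumFinEquiv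

@[simp]
theorem blockIndexEquiv_inl_inl (i : Fin 3) :
    blockIndexEquiv (.inl (.inl i)) = Fin.castAdd 2 (Fin.castAdd 3 i) :=
  rfl

@[simp]
theorem blockIndexEquiv_inl_inr (i : Fin 3) :
    blockIndexEquiv (.inl (.inr i)) = Fin.castAdd 2 (Fin.natAdd 3 i) :=
  rfl

@[simp]
theorem blockIndexEquiv_inr (i : Fin 2) : blockIndexEquiv (.inr i) = Fin.natAdd 6 i :=
  rfl

def reducedGridMatrix (α β γ : R) : Matrix (Fin 8) (Fin 8) R :=
  reindex blockIndexEquiv blockIndexEquiv <|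
    fromBlocks
      (fromBlocks (powerMatrix 3 ![α, β, γ]) (powerMatrix 3 ![α, β, γ]) 0
        ((β - α) • powerMatrix 3 ![α, β, γ]))
      (fromRows (powerMatrix 3 ![α, β]) ((γ - α) • powerMatrix 3 ![α, β]))
      0 (((γ - α) * (γ - β)) • powerMatrix 2 ![α, β])

theorem det_gridRowReduction (α β : R) : (gridRowReduction α β).det = 1 := by
  rw [det_of_isLowerTriangular]
  · simp [gridRowReduction, Fin.prod_univ_succ]
  · intro i j h
    fin_cases i <;> fin_cases j <;> first | rfl | exact absurd h (by decide)

theorem det_reducedGridMatrix (α β γ : R) :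
    (reducedGridMatrix α β γ).det = (α - β) ^ 6 * (α - γ) ^ 4 * (β - γ) ^ 4 := by
  simp only [reducedGridMatrix, det_reindex_self, det_fromBlocks_zero₂₁, det_smul,
    det_powerMatrix_two, det_powerMatrix_three, Fintype.card_fin]
  ring

theorem gridRowReduction_mul_monomialGridMatrix (α β γ : R) :
    gridRowReduction α β * monomialGridMatrix α β γ = reducedGridMatrix α β γ := by
  ext i j
  obtain ⟨i, rfl⟩ := blockIndexEquiv.surjective i
  obtain ⟨j, rfl⟩ := blockIndexEquiv.surjective j
  simp only [reducedGridMatrix, reindex_apply, submatrix_apply, Equiv.symm_apply_apply]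
  rcases i with (i | i) | i <;> rcases j with (j | j) | j <;> fin_cases i <;> fin_cases j <;>
    simp [gridRowReduction, monomialGridMatrix, mul_apply, Fin.sum_univ_succ, powerMatrix] <;> ring

theorem det_monomialGridMatrix (α β γ : R) :
    (monomialGridMatrix α β γ).det = (α - β) ^ 6 * (α - γ) ^ 4 * (β - γ) ^ 4 := by
  have h := congrArg det (gridRowReduction_mul_monomialGridMatrix α β γ)
  rwa [det_mul, det_gridRowReduction, one_mul, det_reducedGridMatrix] at h

theorem det_monomialGridMatrix_ne_zero [IsDomain R] {α β γ : R}
    (hαβ : α ≠ β) (hαγ : α ≠ γ) (hβγ : β ≠ γ) : (monomialGridMatrix α β γ).det ≠ 0 := by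
  rw [det_monomialGridMatrix]
  exact mul_ne_zero (mul_ne_zero (pow_ne_zero _ (sub_ne_zero.2 hαβ))
    (pow_ne_zero _ (sub_ne_zero.2 hαγ))) (pow_ne_zero _ (sub_ne_zero.2 hβγ))

end

/-- With α = (−√N−2)/(N−2), β = (√N−2)/(N−2), γ = −2/(N−2), the given
8×8 matrix has determinant (α−β)⁶(α−γ)⁴(β−γ)⁴, which is nonzero when N > 4. -/
theorem stmt_11 (N : ℝ) (hN : 4 < N)
    (α β γ : ℝ)
    (hα : α = (-Real.sqrt N - 2) / (N - 2))
    (hβ : β = (Real.sqrt N - 2) / (N - 2))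
    (hγ : γ = -2 / (N - 2))
    (M : Matrix (Fin 8) (Fin 8) ℝ)
    (hM : M = !![1, 1, 1, 1, 1, 1, 1, 1;
        α, β, γ, α, β, γ, α, β;
        α^2, β^2, γ^2, α^2, β^2, γ^2, α^2, β^2;
        α, α, α, β, β, β, γ, γ;
        α^2, α*β, α*γ, α*β, β^2, β*γ, α*γ, β*γ;
        α^3, α*β^2, α*γ^2, α^2*β, β^3, β*γ^2, α^2*γ, β^2*γ;
        α^2, α^2, α^2, β^2, β^2, β^2, γ^2, γ^2;
        α^3, α^2*β, α^2*γ, α*β^2, β^3, β^2*γ, α*γ^2, β*γ^2]) :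
    M.det = (α - β) ^ 6 * (α - γ) ^ 4 * (β - γ) ^ 4 ∧ M.det ≠ 0 := by
  have hN2 : N - 2 ≠ 0 := by linarith
  have hsqrt : 0 < Real.sqrt N := Real.sqrt_pos.2 (by linarith)
  have hαβ : α ≠ β := by rw [hα, hβ, Ne, div_left_inj' hN2]; intro h; linarith
  have hαγ : α ≠ γ := by rw [hα, hγ, Ne, div_left_inj' hN2]; intro h; linarith
  have hβγ : β ≠ γ := by rw [hβ, hγ, Ne, div_left_inj' hN2]; intro h; linarith
  subst hM
  exact ⟨det_monomialGridMatrix α β γ, det_monomialGridMatrix_ne_zero hαβ hαγ hβγ⟩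
end

section
/- Let Y be a binary code of length N−2 (with N = 2^{m+1}, m odd) whose distinct codewords have pairwise Hamming distances only in {2^m − 2^{(m−1)/2}, 2^m, 2^m + 2^{(m−1)/2}}. Then |Y| ≤ N²/4. -/
/-!
Delsarte's linear programming bound. Send each codeword `c` to its `±1` vector `u_c` of length
`n = N - 2`, so that `⟨u_c, u_d⟩ = n - 2 d(c, d)` and the three admissible distances become inner
products `s` with `s + 2 ∈ {0, ±r}`, where `r² = n + 2 = N`. The annihilator
`F(s) = (s + 2)((s + 2)² - r²)` kills every off-diagonal pair, so `∑_{c,d} F(s_cd) = |Y| F(n)`.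
On the other hand the Gram moments `M_k = ∑_{c,d} s_cd ^ k` satisfy `M_1 ≥ 0` and
`M_{k+2} ≥ n M_k`: entrywise powers of a Gram matrix are positive semidefinite, and for `±1`
vectors the diagonal part of `s²` contributes `n M_k`. Expanding `F` in moments then gives
`(r² - 1) |Y| (4 |Y| - r⁴) ≤ 0`, i.e. `|Y| ≤ r⁴ / 4 = N² / 4`.
-/

open Finset

section Moments

variable {α ι R : Type*} [Fintype ι] [CommRing R]

lemma sum_sum_sum_mul_eq_sum_sq {β : Type*} (Y : Finset α) (I : Finset β) (g : α → β → R) :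
    ∑ c ∈ Y, ∑ d ∈ Y, ∑ i ∈ I, g c i * g d i = ∑ i ∈ I, (∑ c ∈ Y, g c i) ^ 2 := by
  simp_rw [sq, sum_mul_sum, sum_comm (s := Y) (t := I)]

lemma sq_sum_mul_eq_sum_sum (u v : ι → R) :
    (∑ i, u i * v i) ^ 2 = ∑ i, ∑ j, (u i * u j) * (v i * v j) := by
  rw [sq, sum_mul_sum]
  exact sum_congr rfl fun i _ => sum_congr rfl fun j _ => by ring

def gramMoment (Y : Finset α) (u : α → ι → R) (k : ℕ) : R :=
  ∑ c ∈ Y, ∑ d ∈ Y, (∑ i, u c i * u d i) ^ k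

lemma gramMoment_zero (Y : Finset α) (u : α → ι → R) : gramMoment Y u 0 = (#Y : R) ^ 2 := by
  simp [gramMoment, sq]

variable [LinearOrder R] [IsStrictOrderedRing R]

lemma sum_sum_mul_mul_inner_pow_nonneg (Y : Finset α) (w : α → R) (u : α → ι → R) (k : ℕ) :
    0 ≤ ∑ c ∈ Y, ∑ d ∈ Y, w c * w d * (∑ i, u c i * u d i) ^ k := by
  have h : ∀ c d, w c * w d * (∑ i, u c i * u d i) ^ k
      = ∑ p : Fin k → ι, (w c * ∏ j, u c (p j)) * (w d * ∏ j, u d (p j)) := by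
    intro c d
    rw [Fintype.sum_pow, mul_sum]
    refine sum_congr rfl fun p _ => ?_
    rw [prod_mul_distrib]; ring
  simp_rw [h, sum_sum_sum_mul_eq_sum_sq]
  exact sum_nonneg fun p _ => sq_nonneg _

lemma gramMoment_one_nonneg (Y : Finset α) (u : α → ι → R) : 0 ≤ gramMoment Y u 1 := by
  simpa [gramMoment] using sum_sum_mul_mul_inner_pow_nonneg Y 1 u 1

lemma card_mul_gramMoment_le_gramMoment_add_two (Y : Finset α) (u : α → ι → R)
    (hu : ∀ c i, u c i * u c i = 1) (k : ℕ) :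
    Fintype.card ι * gramMoment Y u k ≤ gramMoment Y u (k + 2) := by
  set T : ι → ι → R := fun i j =>
    ∑ c ∈ Y, ∑ d ∈ Y, (u c i * u c j) * (u d i * u d j) * (∑ l, u c l * u d l) ^ k
  have hT : gramMoment Y u (k + 2) = ∑ i, ∑ j, T i j := by
    simp only [T, gramMoment, pow_add _ k 2, sq_sum_mul_eq_sum_sum, mul_sum]
    simp_rw [sum_comm (s := Y) (t := univ)]
    exact sum_congr rfl fun i _ => sum_congr rfl fun j _ =>
      sum_congr rfl fun c _ => sum_congr rfl fun d _ => mul_comm _ _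
  have hdiag : ∀ i, T i i = gramMoment Y u k := by
    intro i
    simp [T, gramMoment, hu]
  calc (Fintype.card ι : R) * gramMoment Y u k = ∑ i, T i i := by simp [hdiag]
    _ ≤ ∑ i, ∑ j, T i j := sum_le_sum fun i _ =>
        single_le_sum (f := T i) (fun j _ => sum_sum_mul_mul_inner_pow_nonneg Y _ u k)
          (mem_univ i)
    _ = gramMoment Y u (k + 2) := hT.symm

end Moments

theorem four_mul_card_le_of_inner_add_two_mem {α ι R : Type*} [Fintype ι] [CommRing R]
    [LinearOrder R] [IsStrictOrderedRing R] (Y : Finset α) (u : α → ι → R)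
    (hu : ∀ c i, u c i * u c i = 1) (r : R) (hr : (Fintype.card ι : R) + 2 = r ^ 2)
    (hY : ∀ c ∈ Y, ∀ d ∈ Y, c ≠ d → ∑ i, u c i * u d i + 2 ∈ ({-r, 0, r} : Set R)) :
    4 * (#Y : R) ≤ r ^ 4 := by
  set F : R → R := fun x => (x + 2) * ((x + 2) ^ 2 - r ^ 2)
  have hF_off : ∀ c ∈ Y, ∀ d ∈ Y, d ≠ c → F (∑ i, u c i * u d i) = 0 := by
    intro c hc d hd hdc
    have h := hY c hc d hd hdc.symm
    simp only [Set.mem_insert_iff, Set.mem_singleton_iff] at h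
    rcases h with h | h | h <;> simp only [F, h] <;> ring
  have hF_sum : ∑ c ∈ Y, ∑ d ∈ Y, F (∑ i, u c i * u d i) = #Y * (r ^ 2 * (r ^ 4 - r ^ 2)) := by
    rw [sum_congr rfl fun c hc => sum_eq_single_of_mem c hc (hF_off c hc)]
    simp only [hu, sum_const, card_univ, nsmul_one, F, hr]
    rw [← nsmul_eq_mul]
    ring
  have hF_moments : ∑ c ∈ Y, ∑ d ∈ Y, F (∑ i, u c i * u d i) = gramMoment Y u 3
      + 6 * gramMoment Y u 2 + (12 - r ^ 2) * gramMoment Y u 1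
      + (8 - 2 * r ^ 2) * gramMoment Y u 0 := by
    simp only [gramMoment, mul_sum, ← sum_add_distrib]
    exact sum_congr rfl fun c _ => sum_congr rfl fun d _ => by ring
  have hn : (Fintype.card ι : R) = r ^ 2 - 2 := eq_sub_of_add_eq hr
  have hM1 := gramMoment_one_nonneg Y u
  have hM2 := card_mul_gramMoment_le_gramMoment_add_two Y u hu 0
  have hM3 := card_mul_gramMoment_le_gramMoment_add_two Y u hu 1
  rw [hn, gramMoment_zero] at hM2
  rw [hn] at hM3
  rw [hF_moments, gramMoment_zero] at hF_sum
  have key : (r ^ 2 - 1) * #Y * (4 * #Y - r ^ 4) ≤ 0 := by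
    linear_combination hM3 + 6 * hM2 + 10 * hM1 + hF_sum
  rcases (Nat.cast_nonneg #Y : (0 : R) ≤ #Y).eq_or_lt with hY0 | hY0
  · rw [← hY0, mul_zero]; positivity
  · have hr1 : 0 < r ^ 2 - 1 := by linarith [(Nat.cast_nonneg _ : (0 : R) ≤ Fintype.card ι)]
    linarith [nonpos_of_mul_nonpos_right key (mul_pos hr1 hY0)]

section SignVector

variable {ι : Type*}

def signVec (c : ι → ZMod 2) (i : ι) : ℤ := (-1) ^ (c i).val

lemma signVec_mul_self (c : ι → ZMod 2) (i : ι) : signVec c i * signVec c i = 1 := by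
  rw [signVec, ← pow_add, ← two_mul, pow_mul]; norm_num

lemma signVec_mul_signVec (c d : ι → ZMod 2) (i : ι) :
    signVec c i * signVec d i = 1 - 2 * if c i ≠ d i then 1 else 0 := by
  unfold signVec
  generalize c i = a
  generalize d i = b
  fin_cases a <;> fin_cases b <;> rfl

lemma sum_signVec_mul_signVec [Fintype ι] (c d : ι → ZMod 2) :
    ∑ i, signVec c i * signVec d i = Fintype.card ι - 2 * hammingDist c d := by
  simp only [signVec_mul_signVec, sum_sub_distrib, ← mul_sum, sum_boole, hammingDist]
  simp

theorem four_mul_card_le_of_sq_sub_two_mul_hammingDist_mem [Fintype ι]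
    (Y : Finset (ι → ZMod 2)) (r : ℤ) (hr : (Fintype.card ι : ℤ) + 2 = r ^ 2)
    (hY : ∀ c ∈ Y, ∀ d ∈ Y, c ≠ d → r ^ 2 - 2 * (hammingDist c d : ℤ) ∈ ({-r, 0, r} : Set ℤ)) :
    4 * (#Y : ℤ) ≤ r ^ 4 := by
  refine four_mul_card_le_of_inner_add_two_mem Y signVec signVec_mul_self r hr
    fun c hc d hd hcd => ?_
  convert hY c hc d hd hcd using 1
  rw [sum_signVec_mul_signVec, ← hr]
  ring

end SignVector

/-- A binary code of length N−2 (N = 2^{m+1}, m odd) with pairwise distances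
in {2^m − 2^{(m−1)/2}, 2^m, 2^m + 2^{(m−1)/2}} has at most N²/4 codewords. -/
theorem stmt_14 (m : ℕ) (hm : Odd m)
    (Y : Finset (Fin (2 ^ (m + 1) - 2) → ZMod 2))
    (hdist : ∀ c ∈ Y, ∀ d ∈ Y, c ≠ d →
      hammingDist c d ∈
        ({2 ^ m - 2 ^ ((m - 1) / 2), 2 ^ m, 2 ^ m + 2 ^ ((m - 1) / 2)} : Set ℕ)) :
    Y.card ≤ (2 ^ (m + 1)) ^ 2 / 4 := by
  obtain ⟨k, rfl⟩ := hm
  have hk : (2 * k + 1 - 1) / 2 = k := by omega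
  rw [hk] at hdist
  have hN : (2 : ℕ) ≤ 2 ^ (2 * k + 1 + 1) := Nat.le_self_pow (by omega) 2
  have hcard : (Fintype.card (Fin (2 ^ (2 * k + 1 + 1) - 2)) : ℤ) + 2 = (2 ^ (k + 1)) ^ 2 := by
    rw [Fintype.card_fin, Nat.cast_sub hN]; push_cast; ring
  have hY := four_mul_card_le_of_sq_sub_two_mul_hammingDist_mem Y _ hcard fun c hc d hd hcd => by
    have hkm : 2 ^ k ≤ 2 ^ (2 * k + 1) := Nat.pow_le_pow_right (by norm_num) (by omega)
    have h := hdist c hc d hd hcd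
    simp only [Set.mem_insert_iff, Set.mem_singleton_iff] at h ⊢
    rcases h with h | h | h <;> rw [h] <;> push_cast [hkm]
    · exact Or.inr (Or.inr (by ring))
    · exact Or.inr (Or.inl (by ring))
    · exact Or.inl (by ring)
  have hr4 : ((2 : ℤ) ^ (k + 1)) ^ 4 = 4 * 2 ^ (4 * k + 2) := by ring
  rw [show (2 ^ (2 * k + 1 + 1)) ^ 2 = 4 * 2 ^ (4 * k + 2) by ring,
    Nat.mul_div_cancel_left _ four_pos]
  exact_mod_cast (by linarith : (#Y : ℤ) ≤ 2 ^ (4 * k + 2))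
end

section
/- Let Y be a binary code of length N−1 (with N = 2^{m+1}, m odd) whose distinct codewords have pairwise Hamming distances only in {2^m − 2^{(m−1)/2}, 2^m, 2^m + 2^{(m−1)/2}}. Then |Y| ≤ N²/2. -/
/-!
Delsarte's linear programming bound with the annihilator polynomial
`F x = (x + 1) ((x + 1)² - N)`, where `N = n + 1` and `x = n - 2 d` is the inner product of the
`±1`-images of two words at distance `d`. The hypothesis on distances says exactly that `F`
vanishes at the inner product of any two distinct codewords, so `∑_{c, d ∈ Y} F(x(c, d)) = |Y| F(n)
= |Y| n N²`. On the other hand `F x = x (x² - n) + 3 (x² - n) + 2 x + 2 n`, and `x`, `x² - n`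
(a sum over pairs of distinct coordinates) and their product are Gram kernels, whose sums over
`Y × Y` are nonnegative; hence the same sum is at least `2 n |Y|²`.
-/

open Finset

universe u

def IsGramKernel {α : Type u} (K : α → α → ℤ) : Prop :=
  ∃ (τ : Type u) (T : Finset τ) (g : τ → α → ℤ), ∀ c d, K c d = ∑ t ∈ T, g t c * g t d

namespace IsGramKernel

variable {α : Type u} {K K₁ K₂ : α → α → ℤ}

theorem sum_sum_nonneg (hK : IsGramKernel K) (Y : Finset α) :
    0 ≤ ∑ c ∈ Y, ∑ d ∈ Y, K c d := by
  obtain ⟨τ, T, g, hg⟩ := hK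
  calc 0 ≤ ∑ t ∈ T, (∑ c ∈ Y, g t c) ^ 2 := sum_nonneg fun _ _ => sq_nonneg _
    _ = ∑ c ∈ Y, ∑ d ∈ Y, K c d := by
      simp_rw [hg, sq, sum_mul_sum]
      rw [sum_comm]
      exact sum_congr rfl fun _ _ => sum_comm

theorem mul (h₁ : IsGramKernel K₁) (h₂ : IsGramKernel K₂) :
    IsGramKernel fun c d => K₁ c d * K₂ c d := by
  obtain ⟨τ₁, T₁, g₁, hg₁⟩ := h₁
  obtain ⟨τ₂, T₂, g₂, hg₂⟩ := h₂
  refine ⟨τ₁ × τ₂, T₁ ×ˢ T₂, fun t c => g₁ t.1 c * g₂ t.2 c, fun c d => ?_⟩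
  dsimp only
  rw [hg₁, hg₂, sum_mul_sum, sum_product]
  exact sum_congr rfl fun _ _ => sum_congr rfl fun _ _ => by ring

end IsGramKernel

def signOf (a : ZMod 2) : ℤ := if a = 0 then 1 else -1

theorem signOf_mul_signOf (a b : ZMod 2) : signOf a * signOf b = if a = b then 1 else -1 := by
  revert a b; decide

section Correlation

variable {ι : Type u} [Fintype ι]

def correlation (c d : ι → ZMod 2) : ℤ := ∑ i, signOf (c i) * signOf (d i)

theorem correlation_eq (c d : ι → ZMod 2) :
    correlation c d = Fintype.card ι - 2 * hammingDist c d := by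
  have h : ∀ i, signOf (c i) * signOf (d i) = 1 - 2 * if c i ≠ d i then 1 else 0 := by
    intro i
    rw [signOf_mul_signOf]
    split_ifs <;> simp_all
  rw [correlation, sum_congr rfl fun i _ => h i, sum_sub_distrib, ← mul_sum, sum_boole]
  simp [hammingDist, card_univ]

theorem correlation_self (c : ι → ZMod 2) : correlation c c = Fintype.card ι := by
  simp [correlation_eq]

theorem isGramKernel_correlation : IsGramKernel (correlation (ι := ι)) :=
  ⟨ι, univ, fun i c => signOf (c i), fun _ _ => rfl⟩

theorem isGramKernel_correlation_sq_sub_card :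
    IsGramKernel fun c d : ι → ZMod 2 => correlation c d ^ 2 - Fintype.card ι := by
  classical
  refine ⟨ι × ι, univ.offDiag, fun t c => signOf (c t.1) * signOf (c t.2), fun c d => ?_⟩
  set f : ι → ℤ := fun i => signOf (c i) * signOf (d i)
  have hf : ∀ i, f i * f i = 1 := fun i => by
    simp only [f, signOf_mul_signOf]; split_ifs <;> simp_all
  have hsq : correlation c d ^ 2 =
      ∑ t ∈ univ.diag, f t.1 * f t.2 + ∑ t ∈ univ.offDiag, f t.1 * f t.2 := by
    rw [← sum_union (disjoint_diag_offDiag _), diag_union_offDiag, sum_product, sq, correlation,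
      sum_mul_sum]
  dsimp only
  rw [hsq, sum_diag]
  simp only [hf, sum_const, card_univ, nsmul_eq_mul, mul_one, add_sub_cancel_left]
  exact sum_congr rfl fun _ _ => by ring

end Correlation

theorem two_mul_card_le_sq_of_cubic_eq_zero {ι : Type u} [Fintype ι] [Nonempty ι]
    (Y : Finset (ι → ZMod 2))
    (hY : ∀ c ∈ Y, ∀ d ∈ Y, c ≠ d →
      ((Fintype.card ι + 1 : ℤ) - 2 * hammingDist c d) *
        (((Fintype.card ι + 1 : ℤ) - 2 * hammingDist c d) ^ 2 - (Fintype.card ι + 1)) = 0) :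
    2 * Y.card ≤ (Fintype.card ι + 1) ^ 2 := by
  set n : ℤ := (Fintype.card ι : ℤ) with hn
  set F : ℤ → ℤ := fun x => (x + 1) * ((x + 1) ^ 2 - (n + 1))
  have hF : ∀ x, F x = x * (x ^ 2 - n) + 3 * (x ^ 2 - n) + 2 * x + 2 * n := fun x => by ring
  have hoff : ∀ c ∈ Y, ∀ d ∈ Y, c ≠ d → F (correlation c d) = 0 := by
    intro c hc d hd hcd
    simpa [F, correlation_eq, ← hn, add_sub_right_comm] using hY c hc d hd hcd
  have hdiag : ∑ c ∈ Y, ∑ d ∈ Y, F (correlation c d) = Y.card * (n * (n + 1) ^ 2) := by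
    rw [sum_congr rfl fun c hc => sum_eq_single_of_mem c hc fun d hd hdc => hoff c hc d hd hdc.symm]
    simp only [correlation_self, ← hn, F, sum_const, nsmul_eq_mul]
    ring
  have hlower : 2 * n * Y.card ^ 2 ≤ ∑ c ∈ Y, ∑ d ∈ Y, F (correlation c d) := by
    have h₃ := (isGramKernel_correlation.mul isGramKernel_correlation_sq_sub_card).sum_sum_nonneg Y
    have h₂ := isGramKernel_correlation_sq_sub_card.sum_sum_nonneg Y
    have h₁ := isGramKernel_correlation.sum_sum_nonneg Y
    simp only [hF, sum_add_distrib, ← mul_sum, sum_const, nsmul_eq_mul]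
    nlinarith
  have hn_pos : 0 < n := by simp [hn, Fintype.card_pos]
  have hcard : 2 * (Y.card : ℤ) ≤ (n + 1) ^ 2 := by
    rcases (Y.card.cast_nonneg : (0 : ℤ) ≤ Y.card).eq_or_lt with h | h
    · rw [← h]; positivity
    · exact le_of_mul_le_mul_left (by nlinarith) (mul_pos hn_pos h)
  rw [hn] at hcard
  exact_mod_cast hcard

theorem cubic_eq_zero_of_mem {k d : ℕ}
    (hd : d ∈ ({2 ^ (2 * k + 1) - 2 ^ k, 2 ^ (2 * k + 1), 2 ^ (2 * k + 1) + 2 ^ k} : Set ℕ)) :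
    ((2 : ℤ) ^ (2 * k + 2) - 2 * d) *
      (((2 : ℤ) ^ (2 * k + 2) - 2 * d) ^ 2 - 2 ^ (2 * k + 2)) = 0 := by
  have hle : 2 ^ k ≤ 2 ^ (2 * k + 1) := Nat.pow_le_pow_right two_pos (by omega)
  have hpow : ∀ j, (2 : ℤ) ^ (2 * k + j) = 2 ^ j * (2 ^ k) ^ 2 := fun j => by ring
  rcases hd with rfl | rfl | rfl
  · push_cast [hle]; simp only [hpow]; ring
  · push_cast; simp only [hpow]; ring
  · push_cast; simp only [hpow]; ring

/-- A binary code of length N−1 (N = 2^{m+1}, m odd) with pairwise distances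
in {2^m − 2^{(m−1)/2}, 2^m, 2^m + 2^{(m−1)/2}} has at most N²/2 codewords. -/
theorem stmt_15 (m : ℕ) (hm : Odd m)
    (Y : Finset (Fin (2 ^ (m + 1) - 1) → ZMod 2))
    (hdist : ∀ c ∈ Y, ∀ d ∈ Y, c ≠ d →
      hammingDist c d ∈
        ({2 ^ m - 2 ^ ((m - 1) / 2), 2 ^ m, 2 ^ m + 2 ^ ((m - 1) / 2)} : Set ℕ)) :
    Y.card ≤ (2 ^ (m + 1)) ^ 2 / 2 := by
  obtain ⟨k, rfl⟩ := hm
  have hN : (Fintype.card (Fin (2 ^ (2 * k + 1 + 1) - 1)) + 1 : ℤ) = 2 ^ (2 * k + 2) := by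
    simp [Nat.one_le_two_pow]
  have : Nonempty (Fin (2 ^ (2 * k + 1 + 1) - 1)) := ⟨⟨0, by simp⟩⟩
  have key := two_mul_card_le_sq_of_cubic_eq_zero Y fun c hc d hd hcd => by
    rw [hN]
    exact cubic_eq_zero_of_mem (by simpa using hdist c hc d hd hcd)
  rw [Nat.le_div_iff_mul_le two_pos]
  zify at key ⊢
  rw [hN] at key
  linarith
end

section
/- Let L be the set of N² vectors in ℝ^N of the form ((−1)^{c_v}/√N)_v arising from a Kerdock-like code C of length N with N² codewords and nonzero distances (N±√N)/2, N/2, N, where C is a union of N/2 cosets of pairwise 'orthogonal-basis' type (each coset of size 2N giving an orthonormal basis together with negatives). Fix two coordinates i ≠ j and let Y' = {x ∈ L : x_i = x_j = 1/√N}. Then |Y'| = N²/4, and after deleting coordinates i, j the resulting vectors in ℝ^{N−2} have pairwise inner products only in {(−√N−2)/N, −2/N, (√N−2)/N}. -/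
open Finset
open scoped Matrix

/-!
The sign vector `v ↦ (-1)^(c v)` of a word `c` of length `N` has inner product `N - 2 d(c, d)` with
that of `d`. Dropping two coordinates where both words vanish lowers it by `2`, so the distances
`(N ± √N)/2` and `N/2` give the three listed values; distance `N` cannot occur, as it would force
`d` to be the complement of `c`.

For the count, the `N` words of a block `B k` vanishing at `i` are pairwise at distance `N/2`,
so their sign vectors are the rows of a Hadamard matrix. Its columns are then orthogonal as well,
and orthogonality of columns `i` and `j` says that exactly half of these words vanish at `j`.
Hence each of the `N/2` blocks contributes `N/2` words to `Y'`.
-/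

lemma add_one_add_one {ι : Type*} (c : ι → ZMod 2) : (c + fun _ => 1) + (fun _ => 1) = c := by
  funext v
  exact (by decide : ∀ x : ZMod 2, x + 1 + 1 = x) (c v)

lemma two_mul_card_filter_apply_eq_zero {ι : Type*} (T : Finset (ι → ZMod 2))
    (hTneg : ∀ c ∈ T, (c + fun _ => (1 : ZMod 2)) ∈ T) (i : ι) : 2 * #{c ∈ T | c i = 0} = #T := by
  have hswap : #{c ∈ T | c i = 0} = #{c ∈ T | ¬c i = 0} := by
    refine card_nbij' (· + fun _ => 1) (· + fun _ => 1) (fun c hc => ?_) (fun c hc => ?_)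
      (fun c _ => add_one_add_one c) (fun c _ => add_one_add_one c)
    · simp_all
    · have key : ∀ x : ZMod 2, x + 1 = 0 ↔ x ≠ 0 := by decide
      simp_all
  have := card_filter_add_card_filter_not (s := T) (fun c => c i = 0)
  omega

section Complement

variable {ι : Type*} [Fintype ι]

lemma hammingDist_add_hammingDist_add_one (c d : ι → ZMod 2) :
    hammingDist c d + hammingDist d (c + fun _ => 1) = Fintype.card ι := by
  have key : ∀ x y : ZMod 2, y ≠ x + 1 ↔ x = y := by decide
  simp only [hammingDist, Pi.add_apply, key]
  rw [add_comm, card_filter_add_card_filter_not, card_univ]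

lemma hammingDist_add_one_right (c : ι → ZMod 2) :
    hammingDist c (c + fun _ => 1) = Fintype.card ι := by
  simpa using hammingDist_add_hammingDist_add_one c c

lemma hammingDist_ne_card_of_apply_eq {c d : ι → ZMod 2} {i : ι} (h : c i = d i) :
    hammingDist c d ≠ Fintype.card ι := by
  intro hd
  have hd' : hammingDist d (c + fun _ => 1) = 0 := by
    have := hammingDist_add_hammingDist_add_one c d
    omega
  rw [hammingDist_eq_zero] at hd'
  have hi := congrFun hd' i
  simp only [Pi.add_apply, ← h] at hi
  exact (by decide : ∀ x : ZMod 2, x ≠ x + 1) _ hi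

end Complement

section Signs

variable {R : Type*} [Ring R]

lemma neg_one_pow_val_add (x y : ZMod 2) :
    (-1 : R) ^ (x + y).val = (-1) ^ x.val * (-1) ^ y.val := by
  rw [ZMod.val_add, ← neg_one_pow_eq_pow_mod_two, pow_add]

lemma sum_neg_one_pow_val {α : Type*} (s : Finset α) (g : α → ZMod 2) :
    ∑ x ∈ s, (-1 : R) ^ (g x).val = #s - 2 * #{x ∈ s | g x ≠ 0} := by
  have hterm : ∀ y : ZMod 2, (-1 : R) ^ y.val = 1 - 2 * if y ≠ 0 then 1 else 0 := by
    intro y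
    rcases (by decide : ∀ y : ZMod 2, y = 0 ∨ y = 1) y with rfl | rfl
    · simp
    · rw [if_pos one_ne_zero, ZMod.val_one, pow_one, mul_one, ← one_add_one_eq_two,
        sub_add_cancel_left]
  simp only [hterm, sum_sub_distrib, ← mul_sum, sum_boole, sum_const, nsmul_one]

lemma sum_neg_one_pow_val_mul {ι : Type*} [Fintype ι] (c d : ι → ZMod 2) :
    ∑ v, (-1 : R) ^ (c v).val * (-1) ^ (d v).val = Fintype.card ι - 2 * hammingDist c d := by
  have key : ∀ x y : ZMod 2, x + y ≠ 0 ↔ x ≠ y := by decide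
  simp only [← neg_one_pow_val_add, sum_neg_one_pow_val, key, card_univ, hammingDist]

lemma sum_erase_erase_neg_one_pow_val_mul {ι : Type*} [Fintype ι] [DecidableEq ι]
    {c d : ι → ZMod 2} {i j : ι} (hij : i ≠ j)
    (hci : c i = 0) (hdi : d i = 0) (hcj : c j = 0) (hdj : d j = 0) :
    ∑ v ∈ (univ.erase i).erase j, (-1 : R) ^ (c v).val * (-1) ^ (d v).val =
      Fintype.card ι - 2 * hammingDist c d - 2 := by
  rw [← sum_neg_one_pow_val_mul, ← add_sum_erase univ _ (mem_univ i),
    ← add_sum_erase _ _ (mem_erase.2 ⟨hij.symm, mem_univ j⟩)]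
  simp only [hci, hdi, hcj, hdj, ZMod.val_zero, pow_zero, mul_one]
  rw [← add_assoc, one_add_one_eq_two, add_sub_cancel_left]

end Signs

theorem Matrix.transpose_mul_self_eq_smul_one {m n K : Type*} [Fintype m] [Fintype n]
    [DecidableEq m] [DecidableEq n] [Field K] (e : m ≃ n) (M : Matrix m n K) {r : K} (hr : r ≠ 0)
    (h : M * Mᵀ = r • 1) : Mᵀ * M = r • 1 := by
  have hinv : (r⁻¹ • Mᵀ) * M = 1 := by
    refine (Matrix.mul_eq_one_comm_of_equiv e).1 ?_
    rw [Matrix.mul_smul, h, smul_smul, inv_mul_cancel₀ hr, one_smul]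
  rw [← hinv, Matrix.smul_mul, smul_smul, mul_inv_cancel₀ hr, one_smul]

section Block

variable {ι : Type*} [Fintype ι]

lemma sum_neg_one_pow_val_mul_eq_zero (S : Finset (ι → ZMod 2)) (hS : #S = Fintype.card ι)
    (horth : ∀ a ∈ S, ∀ b ∈ S, a ≠ b → 2 * hammingDist a b = Fintype.card ι)
    {i j : ι} (hij : i ≠ j) :
    ∑ c ∈ S, (-1 : ℝ) ^ (c i).val * (-1) ^ (c j).val = 0 := by
  classical
  let M : Matrix S ι ℝ := Matrix.of fun c v => (-1) ^ (c.1 v).val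
  have hrows : M * Mᵀ = (Fintype.card ι : ℝ) • 1 := by
    ext a b
    simp only [Matrix.mul_apply, Matrix.transpose_apply, M, Matrix.of_apply, sum_neg_one_pow_val_mul]
    rcases eq_or_ne a b with rfl | hab
    · simp
    · rw [Matrix.smul_apply, Matrix.one_apply_ne hab, smul_zero, sub_eq_zero]
      exact_mod_cast (horth a a.2 b b.2 (Subtype.coe_ne_coe.2 hab)).symm
  have hcard : (Fintype.card ι : ℝ) ≠ 0 := Nat.cast_ne_zero.2 (Fintype.card_pos_iff.2 ⟨i⟩).ne'
  have hcols := congrFun (congrFun (Matrix.transpose_mul_self_eq_smul_one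
    (Fintype.equivOfCardEq (by simpa using hS)) M hcard hrows) i) j
  rw [Matrix.mul_apply, Matrix.smul_apply, Matrix.one_apply_ne hij, smul_zero] at hcols
  rw [← hcols]
  exact (sum_coe_sort S fun c => (-1 : ℝ) ^ (c i).val * (-1) ^ (c j).val).symm

variable (T : Finset (ι → ZMod 2)) (hTneg : ∀ c ∈ T, (c + fun _ => (1 : ZMod 2)) ∈ T)
  (hTorth : ∀ c ∈ T, ∀ d ∈ T, c ≠ d →
    hammingDist c d = Fintype.card ι / 2 ∨ hammingDist c d = Fintype.card ι)
include hTneg hTorth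

lemma even_card_of_apply_eq {a b : ι → ZMod 2} (ha : a ∈ T) (hb : b ∈ T) (hab : a ≠ b) {i : ι}
    (hi : a i = b i) : Even (Fintype.card ι) := by
  have hne := hammingDist_ne_card_of_apply_eq hi
  have hdist : hammingDist a b = Fintype.card ι / 2 := (hTorth a ha b hb hab).resolve_right hne
  have hb' : b ≠ a + fun _ => 1 := fun h => hne (h ▸ hammingDist_add_one_right a)
  have hsum := hammingDist_add_hammingDist_add_one a b
  rcases hTorth b hb _ (hTneg a ha) hb' with h | h
  · exact Nat.even_iff.2 (by omega)
  · exact absurd (hammingDist_eq_zero.1 (by omega)) hab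

lemma two_mul_card_filter_apply_eq_zero_and_apply_eq_zero (hTcard : #T = 2 * Fintype.card ι)
    {i j : ι} (hij : i ≠ j) : 2 * #{c ∈ T | c i = 0 ∧ c j = 0} = Fintype.card ι := by
  set S := {c ∈ T | c i = 0}
  have hS : #S = Fintype.card ι := by
    have : 2 * #S = #T := two_mul_card_filter_apply_eq_zero T hTneg i
    omega
  obtain ⟨a, ha, b, hb, hab⟩ := one_lt_card.1 (hS ▸ Fintype.one_lt_card_iff.2 ⟨i, j, hij⟩)
  rw [mem_filter] at ha hb
  have heven := even_card_of_apply_eq T hTneg hTorth ha.1 hb.1 hab (ha.2.trans hb.2.symm)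
  have horth : ∀ a ∈ S, ∀ b ∈ S, a ≠ b → 2 * hammingDist a b = Fintype.card ι := by
    intro a ha b hb hab
    rw [mem_filter] at ha hb
    rcases hTorth a ha.1 b hb.1 hab with h | h
    · rw [h, Nat.two_mul_div_two_of_even heven]
    · exact absurd h (hammingDist_ne_card_of_apply_eq (ha.2.trans hb.2.symm))
  have hcol := sum_neg_one_pow_val_mul_eq_zero S hS horth hij
  rw [sum_congr rfl fun c hc => by rw [(mem_filter.1 hc).2, ZMod.val_zero, pow_zero, one_mul],
    sum_neg_one_pow_val, sub_eq_zero, hS] at hcol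
  have hsplit := card_filter_add_card_filter_not (s := S) (fun c => c j = 0)
  have hhalf : Fintype.card ι = 2 * #{c ∈ S | ¬c j = 0} := by exact_mod_cast hcol
  rw [filter_filter] at hsplit
  omega

end Block

theorem stmt_19_general (N : ℕ) (C : Finset (Fin N → ZMod 2))
    (hdist : ∀ c ∈ C, ∀ d ∈ C, c ≠ d →
      (hammingDist c d : ℝ) ∈
        ({(N - Real.sqrt N) / 2, (N + Real.sqrt N) / 2, (N : ℝ) / 2, (N : ℝ)} : Set ℝ))
    (B : Fin (N / 2) → Finset (Fin N → ZMod 2))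
    (hBcover : C = Finset.univ.biUnion B)
    (hBdisj : ∀ k l, k ≠ l → Disjoint (B k) (B l))
    (hBcard : ∀ k, (B k).card = 2 * N)
    (hBneg : ∀ k, ∀ c ∈ B k, (c + fun _ => (1 : ZMod 2)) ∈ B k)
    (hBorth : ∀ k, ∀ c ∈ B k, ∀ d ∈ B k, c ≠ d →
      hammingDist c d = N / 2 ∨ hammingDist c d = N)
    (f : (Fin N → ZMod 2) → (Fin N → ℝ))
    (hf : ∀ c v, f c v = (-1 : ℝ) ^ ((c v).val) / Real.sqrt N)
    (i j : Fin N) (hij : i ≠ j)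
    (Y' : Finset (Fin N → ZMod 2))
    (hY' : Y' = C.filter fun c => c i = 0 ∧ c j = 0) :
    Y'.card = N ^ 2 / 4 ∧
      ∀ c ∈ Y', ∀ d ∈ Y', c ≠ d →
        (∑ v ∈ (Finset.univ.erase i).erase j, f c v * f d v) ∈
          ({(-Real.sqrt N - 2) / N, -2 / (N : ℝ), (Real.sqrt N - 2) / N} : Set ℝ) := by
  have hblock (k : Fin (N / 2)) : 2 * #{c ∈ B k | c i = 0 ∧ c j = 0} = N := by
    simpa using two_mul_card_filter_apply_eq_zero_and_apply_eq_zero (B k) (hBneg k)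
      (by simpa using hBorth k) (by simpa using hBcard k) hij
  constructor
  · have hN : 1 < N := by simpa using Fintype.one_lt_card_iff.2 ⟨i, j, hij⟩
    have heven : 2 ∣ N := ⟨_, (hblock ⟨0, by omega⟩).symm⟩
    rw [hY', hBcover, filter_biUnion,
      card_biUnion fun k _ l _ hkl => disjoint_filter_filter (hBdisj k l hkl),
      sum_const_nat fun k _ => (by have := hblock k; omega : _ = N / 2), card_univ,
      Fintype.card_fin, Nat.div_mul_div_comm heven heven, sq]
  · intro c hc d hd hcd
    rw [hY', mem_filter] at hc hd
    have hne : (hammingDist c d : ℝ) ≠ N := by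
      simpa using hammingDist_ne_card_of_apply_eq (hc.2.1.trans hd.2.1.symm)
    have hsum : ∑ v ∈ (univ.erase i).erase j, f c v * f d v =
        (N - 2 * hammingDist c d - 2) / N := by
      simp only [hf, div_mul_div_comm, Real.mul_self_sqrt (Nat.cast_nonneg N), ← sum_div]
      rw [sum_erase_erase_neg_one_pow_val_mul hij hc.2.1 hd.2.1 hc.2.2 hd.2.2, Fintype.card_fin]
    have h := hdist c hc.1 d hd.1 hcd
    simp only [Set.mem_insert_iff, Set.mem_singleton_iff] at h ⊢
    rw [hsum]
    rcases h with h | h | h | h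
    · exact Or.inr (Or.inr (by rw [h]; ring))
    · exact Or.inl (by rw [h]; ring)
    · exact Or.inr (Or.inl (by rw [h]; ring))
    · exact absurd h hne

/-- From a Kerdock-like code C of length N with N² codewords (a disjoint
union of N/2 subsets of size 2N, each giving an orthonormal basis together with its
negatives), the N²/4 vectors of the associated line-set L having entries +1/√N at two
fixed coordinates i ≠ j, after deleting those coordinates, have pairwise inner products
in {(−√N−2)/N, −2/N, (√N−2)/N}. -/
theorem stmt_19 (N : ℕ) (hN : 0 < N) (C : Finset (Fin N → ZMod 2))
    (hcard : C.card = N ^ 2)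
    (hdist : ∀ c ∈ C, ∀ d ∈ C, c ≠ d →
      (hammingDist c d : ℝ) ∈
        ({(N - Real.sqrt N) / 2, (N + Real.sqrt N) / 2, (N : ℝ) / 2, (N : ℝ)} : Set ℝ))
    (B : Fin (N / 2) → Finset (Fin N → ZMod 2))
    (hBsub : ∀ k, B k ⊆ C)
    (hBcover : C = Finset.univ.biUnion B)
    (hBdisj : ∀ k l, k ≠ l → Disjoint (B k) (B l))
    (hBcard : ∀ k, (B k).card = 2 * N)
    (hBneg : ∀ k, ∀ c ∈ B k, (c + fun _ => (1 : ZMod 2)) ∈ B k)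
    (hBorth : ∀ k, ∀ c ∈ B k, ∀ d ∈ B k, c ≠ d →
      hammingDist c d = N / 2 ∨ hammingDist c d = N)
    (f : (Fin N → ZMod 2) → (Fin N → ℝ))
    (hf : ∀ c v, f c v = (-1 : ℝ) ^ ((c v).val) / Real.sqrt N)
    (i j : Fin N) (hij : i ≠ j)
    (Y' : Finset (Fin N → ZMod 2))
    (hY' : Y' = C.filter fun c => c i = 0 ∧ c j = 0) :
    Y'.card = N ^ 2 / 4 ∧
      ∀ c ∈ Y', ∀ d ∈ Y', c ≠ d →
        (∑ v ∈ (Finset.univ.erase i).erase j, f c v * f d v) ∈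
          ({(-Real.sqrt N - 2) / N, -2 / (N : ℝ), (Real.sqrt N - 2) / N} : Set ℝ) :=
  stmt_19_general N C hdist B hBcover hBdisj hBcard hBneg hBorth f hf i j hij Y' hY'
end
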